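/- arXiv:2502.11636 — 3 statements merged into one kernel-verified Lean document; each statement's English description precedes it below -/
import Mathlib

section
/- Let $\alpha = \sqrt[3]{16} \in \mathbb{R}$, let $R = \mathbb{Z}[\alpha]$ be the subring of $\mathbb{R}$ generated by $\alpha$, and let $K = \mathbb{Q}(\alpha)$ be its field of fractions. Let $A = \begin{pmatrix} 0 & 2 & \alpha \\ 2\alpha & 0 & 4 \\ 4 & \alpha & 0 \end{pmatrix} \in \mathrm{M}_3(R)$. Then there is no matrix $B \in \mathrm{M}_3(R)$ with diagonal entries $(1, -1, 0)$ such that $A$ and $B$, viewed as matrices over $K$, are $K$-similar. -/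
open Polynomial

lemma aux_cube_ne (b : ℚ) : b ^ 3 ≠ 16 := by
  intro hb
  have hbi : IsIntegral ℤ b := by
    refine ⟨X ^ 3 - C 16, monic_X_pow_sub_C _ (by norm_num), ?_⟩
    simp [hb]
  obtain ⟨n, hn⟩ := IsIntegrallyClosed.isIntegral_iff.mp hbi
  have hn3 : (n : ℚ) ^ 3 = 16 := by
    rw [show ((n : ℚ)) = b by exact_mod_cast hn]; exact hb
  have h : n ^ 3 = 16 := by exact_mod_cast hn3
  have h1 : n ≥ 3 := by nlinarith [sq_nonneg (n + 1), sq_nonneg (n - 1), sq_nonneg n]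
  have h2 : n ^ 2 ≥ 9 := by nlinarith
  nlinarith

lemma aux_irr : Irreducible ((X : ℚ[X]) ^ 3 - C 16) :=
  X_pow_sub_C_irreducible_of_prime (by norm_num) aux_cube_ne

lemma aux_not_mem (α : ℝ) (hα3 : α ^ 3 = 16) :
    4 * α + α ^ 2 / 2 ∉ Subring.closure {α} := by
  intro hmem
  -- represent as integer polynomial in α
  have hrep : ∃ P : ℤ[X], aeval α P = 4 * α + α ^ 2 / 2 := by
    refine Subring.closure_induction ?_ ?_ ?_ ?_ ?_ ?_ hmem
    · rintro x rfl; exact ⟨X, by simp⟩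
    · exact ⟨0, by simp⟩
    · exact ⟨1, by simp⟩
    · rintro x y - - ⟨P, hP⟩ ⟨Q, hQ⟩; exact ⟨P + Q, by simp [hP, hQ]⟩
    · rintro x - ⟨P, hP⟩; exact ⟨-P, by simp [hP]⟩
    · rintro x y - - ⟨P, hP⟩ ⟨Q, hQ⟩; exact ⟨P * Q, by simp [hP, hQ]⟩
  obtain ⟨P, hP⟩ := hrep
  set f : ℤ[X] := X ^ 3 - C 16 with hf_def
  have hf : f.Monic := monic_X_pow_sub_C _ (by norm_num)
  have hfa : aeval α f = 0 := by
    simp only [hf_def, map_sub, map_pow, aeval_X, aeval_C, map_ofNat]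
    linarith [hα3]
  set r : ℤ[X] := P %ₘ f with hr_def
  have hPr : aeval α r = 4 * α + α ^ 2 / 2 := by
    have := modByMonic_add_div P f
    calc aeval α r = aeval α (P %ₘ f + f * (P /ₘ f)) := by
          simp [map_add, map_mul, hfa, hr_def]
      _ = aeval α P := by rw [this]
      _ = _ := hP
  have hdeg : r.natDegree < 3 := by
    have h1 : r.degree < f.degree := degree_modByMonic_lt P hf
    have h2 : f.degree = 3 := by
      simpa [hf_def] using degree_X_pow_sub_C (by norm_num : 0 < 3) (16 : ℤ)
    rcases eq_or_ne r 0 with h | h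
    · simp [h]
    · have h3 := h2 ▸ h1
      exact (natDegree_lt_iff_degree_lt h).mpr (by exact_mod_cast h3)
  have hsum := aeval_eq_sum_range' (R := ℤ) (S := ℝ) hdeg α
  rw [hPr] at hsum
  have hexp : 4 * α + α ^ 2 / 2 =
      (r.coeff 0 : ℝ) + (r.coeff 1 : ℝ) * α + (r.coeff 2 : ℝ) * α ^ 2 := by
    rw [hsum]
    simp [Finset.sum_range_succ, zsmul_eq_mul]
    try ring
  -- α is integral over ℚ with minimal polynomial X^3 - 16
  have haev : aeval α ((X : ℚ[X]) ^ 3 - C 16) = 0 := by simp [hα3]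
  have hmin : minpoly ℚ α = (X : ℚ[X]) ^ 3 - C 16 :=
    (minpoly.eq_of_irreducible_of_monic aux_irr haev (monic_X_pow_sub_C _ (by norm_num))).symm
  set p : ℚ[X] := C ((r.coeff 2 : ℚ) - 1/2) * X ^ 2 + C ((r.coeff 1 : ℚ) - 4) * X
      + C (r.coeff 0 : ℚ) with hp_def
  have hp0 : p ≠ 0 := by
    intro h
    have hc : p.coeff 2 = (r.coeff 2 : ℚ) - 1/2 := by
      simp only [hp_def, coeff_add, coeff_C_mul, coeff_X_pow, coeff_X, coeff_C]
      norm_num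
    rw [h] at hc
    simp only [coeff_zero] at hc
    have : (2 * r.coeff 2 : ℚ) = 1 := by linarith
    have : (2 * r.coeff 2 : ℤ) = 1 := by exact_mod_cast this
    omega
  have hpa : aeval α p = 0 := by
    simp only [hp_def, map_add, map_mul, map_pow, aeval_C, aeval_X, eq_ratCast]
    push_cast
    linarith [hexp]
  have hle := minpoly.degree_le_of_ne_zero ℚ α hp0 hpa
  rw [hmin] at hle
  have h3 : ((X : ℚ[X]) ^ 3 - C 16).degree = 3 := degree_X_pow_sub_C (by norm_num) _
  have h2 : p.degree ≤ 2 := degree_quadratic_le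
  rw [h3] at hle
  have : (3 : WithBot ℕ) ≤ 2 := le_trans hle h2
  norm_num at this


set_option maxHeartbeats 1000000 in
set_option synthInstance.maxHeartbeats 100000 in
open IntermediateField in
/-- Let `α = 16^(1/3)`, `R = ℤ[α] ⊆ ℝ`, `K = ℚ(α)`, and
`A = !![0, 2, α; 2α, 0, 4; 4, α, 0] ∈ M₃(R)`. Then there is no matrix `B ∈ M₃(R)` with
diagonal `(1, -1, 0)` such that `A` and `B`, viewed over `K`, are `K`-similar.
Here `a : K` is the element of `K` corresponding to `α ∈ ℝ`, and "entries in `R`" is expressed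
by membership of the real entries in `Subring.closure {α}`. -/
theorem not_similar_to_diagonal_one_neg_one_zero
    (α : ℝ) (hα : α = (16 : ℝ) ^ ((1 : ℝ) / 3))
    (a : ℚ⟮α⟯) (ha : (a : ℝ) = α)
    (A : Matrix (Fin 3) (Fin 3) ℚ⟮α⟯)
    (hA : A = !![0, 2, a; 2 * a, 0, 4; 4, a, 0]) :
    ¬ ∃ B : Matrix (Fin 3) (Fin 3) ℚ⟮α⟯,
      (∀ i j, (B i j : ℝ) ∈ Subring.closure {α}) ∧
      B 0 0 = 1 ∧ B 1 1 = -1 ∧ B 2 2 = 0 ∧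
      ∃ g : (Matrix (Fin 3) (Fin 3) ℚ⟮α⟯)ˣ,
        (g : Matrix (Fin 3) (Fin 3) ℚ⟮α⟯) * A * (↑g⁻¹ : Matrix (Fin 3) (Fin 3) ℚ⟮α⟯) = B := by
  rintro ⟨B, hmem, h00, h11, h22, g, hg⟩
  have hα3 : α ^ 3 = 16 := by
    rw [hα, ← Real.rpow_natCast ((16:ℝ) ^ ((1:ℝ)/3)) 3, ← Real.rpow_mul (by norm_num)]
    norm_num
  have ha3 : a ^ 3 = 16 := by
    have h : ((a : ℝ)) ^ 3 = ((16 : ℚ⟮α⟯) : ℝ) := by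
      rw [ha, hα3]; norm_cast
    exact_mod_cast h
  set G : Matrix (Fin 3) (Fin 3) ℚ⟮α⟯ := (g : Matrix (Fin 3) (Fin 3) ℚ⟮α⟯) with hG_def
  set Gi : Matrix (Fin 3) (Fin 3) ℚ⟮α⟯ := (↑g⁻¹ : Matrix (Fin 3) (Fin 3) ℚ⟮α⟯) with hGi_def
  have hGGi : G * Gi = 1 := g.mul_inv
  set c : ℚ⟮α⟯ := a ^ 2 / 2 with hc_def
  set v : Fin 3 → ℚ⟮α⟯ := ![1, a ^ 2 / 4, a / 2] with hv_def
  set w : Fin 3 → ℚ⟮α⟯ := ![a ^ 2 / 2, 2, a] with hw_def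
  set M : Matrix (Fin 3) (Fin 3) ℚ⟮α⟯ := Matrix.of (fun k l => v k * w l) with hM_def
  set D : Matrix (Fin 3) (Fin 3) ℚ⟮α⟯ := Matrix.scalar (Fin 3) c with hD_def
  have hAM : A + D = M := by
    ext k l
    fin_cases k <;> fin_cases l <;>
      simp [hA, hM_def, hD_def, hv_def, hw_def, hc_def,
        Matrix.scalar_apply, Matrix.diagonal_apply] <;>
      norm_cast
    all_goals try ring
    all_goals try linear_combination (-(a / 8)) * ha3
    all_goals linear_combination (-(1 / 4) : ℚ⟮α⟯) * ha3
  have hgM : G * M * Gi = B + D := by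
    rw [← hAM, mul_add, add_mul, hg]
    congr 1
    rw [(Matrix.scalar_commute c (fun r' => mul_comm c r') G).symm.eq, mul_assoc, hGGi, mul_one]
  set V : Fin 3 → ℚ⟮α⟯ := fun i => ∑ k, G i k * v k with hV_def
  set W : Fin 3 → ℚ⟮α⟯ := fun j => ∑ l, w l * Gi l j with hW_def
  have hprod : ∀ i j, (B + D) i j = V i * W j := by
    intro i j
    rw [← hgM]
    calc (G * M * Gi) i j
        = ∑ l, (∑ k, G i k * (v k * w l)) * Gi l j := by
          simp [Matrix.mul_apply, hM_def]
      _ = ∑ l, ∑ k, (G i k * v k) * (w l * Gi l j) := by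
          refine Finset.sum_congr rfl fun l _ => ?_
          rw [Finset.sum_mul]
          exact Finset.sum_congr rfl fun k _ => by ring
      _ = ∑ k, ∑ l, (G i k * v k) * (w l * Gi l j) := Finset.sum_comm
      _ = V i * W j := (Finset.sum_mul_sum _ _ _ _).symm
  have e00 : 1 + c = V 0 * W 0 := by
    have h := hprod 0 0
    rwa [Matrix.add_apply, hD_def, Matrix.scalar_apply, Matrix.diagonal_apply_eq, h00] at h
  have e22 : c = V 2 * W 2 := by
    have h := hprod 2 2
    rwa [Matrix.add_apply, hD_def, Matrix.scalar_apply, Matrix.diagonal_apply_eq, h22,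
      zero_add] at h
  have e02 : B 0 2 = V 0 * W 2 := by
    have h := hprod 0 2
    rwa [Matrix.add_apply, hD_def, Matrix.scalar_apply,
      Matrix.diagonal_apply_ne _ (by decide), add_zero] at h
  have e20 : B 2 0 = V 2 * W 0 := by
    have h := hprod 2 0
    rwa [Matrix.add_apply, hD_def, Matrix.scalar_apply,
      Matrix.diagonal_apply_ne _ (by decide), add_zero] at h
  have key : B 0 2 * B 2 0 = 4 * a + a ^ 2 / 2 := by
    have h1 : B 0 2 * B 2 0 = (1 + c) * c := by
      rw [e02, e20, e00, e22]
      ring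
    rw [h1, hc_def]
    linear_combination (a / 4) * ha3
  have hr : ((B 0 2 : ℝ)) * ((B 2 0 : ℝ)) = 4 * α + α ^ 2 / 2 := by
    have h : ((B 0 2 : ℝ)) * ((B 2 0 : ℝ)) = 4 * (a : ℝ) + (a : ℝ) ^ 2 / 2 :=
      congrArg (fun x : ℚ⟮α⟯ => (x : ℝ)) key
    rwa [ha] at h
  have hmemprod : (4 * α + α ^ 2 / 2) ∈ Subring.closure {α} := by
    rw [← hr]
    exact Subring.mul_mem _ (hmem 0 2) (hmem 2 0)
  exact aux_not_mem α hα3 hmemprod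
end

section
/- The matrix $A = \begin{pmatrix} 1 & 2 \\ -3 & -1 \end{pmatrix} \in \mathrm{M}_2(\mathbb{Z})$ is not $\mathbb{Z}$-similar to any matrix in $\mathrm{M}_2(\mathbb{Z})$ with both diagonal entries equal to $0$. -/
/-- The binary quadratic form `2x² - 2xy + 3y²` (discriminant `-20`) represents
neither `1` nor `5` over `ℤ`. -/
lemma form_not_one_or_five (x y : ℤ)
    (h : 2*x^2 - 2*x*y + 3*y^2 = 1 ∨ 2*x^2 - 2*x*y + 3*y^2 = 5) : False := by
  have hle : 2*x^2 - 2*x*y + 3*y^2 ≤ 5 := by rcases h with h | h <;> omega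
  have hx : -2 ≤ x ∧ x ≤ 2 := by
    constructor <;> nlinarith [sq_nonneg (x - y), sq_nonneg (x+2), sq_nonneg (x-2), sq_nonneg y]
  have hy : -1 ≤ y ∧ y ≤ 1 := by
    constructor <;> nlinarith [sq_nonneg (x - y), sq_nonneg (y+1), sq_nonneg (y-1), sq_nonneg x]
  obtain ⟨hx1, hx2⟩ := hx
  obtain ⟨hy1, hy2⟩ := hy
  interval_cases x <;> interval_cases y <;> omega

/-- The matrix `A = !![1, 2; -3, -1] ∈ M₂(ℤ)` is not `ℤ`-similar to any matrix in `M₂(ℤ)`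
with both diagonal entries equal to `0`. -/
theorem not_similar_to_zero_diagonal :
    ¬ ∃ B : Matrix (Fin 2) (Fin 2) ℤ, B 0 0 = 0 ∧ B 1 1 = 0 ∧
      ∃ g : (Matrix (Fin 2) (Fin 2) ℤ)ˣ,
        (g : Matrix (Fin 2) (Fin 2) ℤ) * !![1, 2; -3, -1] * (↑g⁻¹ : Matrix (Fin 2) (Fin 2) ℤ)
          = B := by
  rintro ⟨B, hB00, hB11, g, hsim⟩
  have hginv : (↑g⁻¹ : Matrix (Fin 2) (Fin 2) ℤ) * (↑g : Matrix (Fin 2) (Fin 2) ℤ) = 1 :=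
    g.inv_mul
  have key : (g : Matrix (Fin 2) (Fin 2) ℤ) * !![1, 2; -3, -1]
      = B * (↑g : Matrix (Fin 2) (Fin 2) ℤ) := by
    rw [← hsim, Matrix.mul_assoc, Matrix.mul_assoc, hginv, Matrix.mul_one]
  set p := (g : Matrix (Fin 2) (Fin 2) ℤ) 0 0 with hp
  set q := (g : Matrix (Fin 2) (Fin 2) ℤ) 0 1 with hq
  set r := (g : Matrix (Fin 2) (Fin 2) ℤ) 1 0 with hr
  set s := (g : Matrix (Fin 2) (Fin 2) ℤ) 1 1 with hs
  set b := B 0 1 with hb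
  set c := B 1 0 with hc
  have e00 := congrFun (congrFun key 0) 0
  have e01 := congrFun (congrFun key 0) 1
  have e10 := congrFun (congrFun key 1) 0
  have e11 := congrFun (congrFun key 1) 1
  simp only [Matrix.mul_apply, Fin.sum_univ_two, Matrix.of_apply, Matrix.cons_val',
    Matrix.cons_val_zero, Matrix.cons_val_one, Matrix.head_cons, Matrix.head_fin_const,
    Matrix.empty_val', Matrix.cons_val_fin_one, ← hp, ← hq, ← hr, ← hs, ← hb, ← hc,
    hB00, hB11, zero_mul, mul_zero, zero_add, add_zero] at e00 e01 e10 e11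
  -- determinant of g is ±1
  have hdet : p * s - q * r = 1 ∨ p * s - q * r = -1 := by
    have hu : IsUnit ((g : Matrix (Fin 2) (Fin 2) ℤ).det) :=
      IsUnit.of_mul_eq_one _ (by rw [← Matrix.det_mul, g.mul_inv, Matrix.det_one])
    rw [Matrix.det_fin_two] at hu
    rcases Int.isUnit_iff.mp hu with h | h
    · left; rw [← h]
    · right; rw [← h]
  -- determinant of B is 5: (bc+5) annihilates the first column of g
  have hdetB : b * c = -5 := by
    have hp0 : (b*c+5)*p = 0 := by linear_combination (-b)*e10 - e00 + 3*e01
    have hr0 : (b*c+5)*r = 0 := by linear_combination (-c)*e00 - e10 + 3*e11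
    have hkey : (b*c+5)*(p*s - q*r) = 0 := by linear_combination s*hp0 - q*hr0
    rcases hdet with h | h <;> rw [h] at hkey
    · linear_combination hkey
    · linear_combination -hkey
  have hF : b * (p * s - q * r) = 2*p^2 - 2*p*q + 3*q^2 := by
    linear_combination q * e00 - p * e01
  have hG : c * (p * s - q * r) = -(2*r^2 - 2*r*s + 3*s^2) := by
    linear_combination r * e11 - s * e10
  have hprod : (2*p^2 - 2*p*q + 3*q^2) * (2*r^2 - 2*r*s + 3*s^2) = 5 := by
    rcases hdet with h | h <;> rw [h] at hF hG
    · have hb2 : b = 2*p^2 - 2*p*q + 3*q^2 := by linarith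
      have hc2 : c = -(2*r^2 - 2*r*s + 3*s^2) := by linarith
      rw [hb2, hc2] at hdetB
      linear_combination -hdetB
    · have hb2 : b = -(2*p^2 - 2*p*q + 3*q^2) := by linarith
      have hc2 : c = 2*r^2 - 2*r*s + 3*s^2 := by linarith
      rw [hb2, hc2] at hdetB
      linear_combination -hdetB
  have hFpos : 0 ≤ 2*p^2 - 2*p*q + 3*q^2 := by
    nlinarith [sq_nonneg (p - q), sq_nonneg p, sq_nonneg q]
  obtain ⟨F, hFdef⟩ : ∃ F : ℤ, F = 2*p^2 - 2*p*q + 3*q^2 := ⟨_, rfl⟩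
  rw [← hFdef] at hprod hFpos
  have hdvd : F ∣ 5 := ⟨_, hprod.symm⟩
  have h1 : F ≤ 5 := Int.le_of_dvd (by norm_num) hdvd
  have h0 : F ≠ 0 := by rintro rfl; simp at hprod
  have h5 : F = 1 ∨ F = 5 := by
    interval_cases F <;> omega
  exact form_not_one_or_five p q (by rw [← hFdef]; exact h5)
end

section
/- Let $R$ be a commutative ring, let $n \geq 2$, and let $B = (b_{ij}) \in \mathrm{M}_n(R)$ be a matrix with $b_{12} = 1$. Then for any $\gamma_1, \dots, \gamma_n \in R$ with $\gamma_1 + \dots + \gamma_n = \mathrm{Tr}(B)$, the matrix $B$ is $R$-similar to a matrix with diagonal entries $(\gamma_1, \dots, \gamma_n)$. -/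
open Matrix

section Aux

variable {R : Type*} [CommRing R] {n : ℕ}

/-- The unit given by a transvection matrix. -/
noncomputable def transvectionUnit (i j : Fin n) (hij : i ≠ j) (c : R) :
    (Matrix (Fin n) (Fin n) R)ˣ where
  val := Matrix.transvection i j c
  inv := Matrix.transvection i j (-c)
  val_inv := by
    rw [Matrix.transvection_mul_transvection_same i j hij, add_neg_cancel,
      Matrix.transvection_zero]
  inv_val := by
    rw [Matrix.transvection_mul_transvection_same i j hij, neg_add_cancel,
      Matrix.transvection_zero]

/-- Similarity relation. -/
def Sim (B C : Matrix (Fin n) (Fin n) R) : Prop :=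
  ∃ g : (Matrix (Fin n) (Fin n) R)ˣ,
    (g : Matrix (Fin n) (Fin n) R) * B * (↑g⁻¹ : Matrix (Fin n) (Fin n) R) = C

lemma Sim.refl (B : Matrix (Fin n) (Fin n) R) : Sim B B :=
  ⟨1, by simp⟩

lemma Sim.trans {B C D : Matrix (Fin n) (Fin n) R} (h1 : Sim B C) (h2 : Sim C D) :
    Sim B D := by
  obtain ⟨g1, hg1⟩ := h1
  obtain ⟨g2, hg2⟩ := h2
  refine ⟨g2 * g1, ?_⟩
  rw [← hg2, ← hg1]
  simp [Matrix.mul_assoc]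

lemma Sim.trace {B C : Matrix (Fin n) (Fin n) R} (h : Sim B C) : B.trace = C.trace := by
  obtain ⟨g, hg⟩ := h
  rw [← hg, Matrix.trace_units_conj]

/-- Conjugation by a transvection. -/
noncomputable def conjT (i j : Fin n) (c : R) (B : Matrix (Fin n) (Fin n) R) :
    Matrix (Fin n) (Fin n) R :=
  Matrix.transvection i j c * B * Matrix.transvection i j (-c)

lemma sim_conjT (i j : Fin n) (hij : i ≠ j) (c : R) (B : Matrix (Fin n) (Fin n) R) :
    Sim B (conjT i j c B) :=
  ⟨transvectionUnit i j hij c, rfl⟩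

lemma conjT_apply_of_ne_of_ne (i j : Fin n) (c : R) (B : Matrix (Fin n) (Fin n) R)
    (a b : Fin n) (ha : a ≠ i) (hb : b ≠ j) :
    conjT i j c B a b = B a b := by
  rw [conjT, Matrix.mul_transvection_apply_of_ne i j a b hb,
    Matrix.transvection_mul_apply_of_ne i j a b ha]

lemma conjT_apply_same_of_ne (i j : Fin n) (c : R) (B : Matrix (Fin n) (Fin n) R)
    (b : Fin n) (hb : b ≠ j) :
    conjT i j c B i b = B i b + c * B j b := by
  rw [conjT, Matrix.mul_transvection_apply_of_ne i j i b hb,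
    Matrix.transvection_mul_apply_same i j b]

lemma conjT_apply_of_ne_same (i j : Fin n) (c : R) (B : Matrix (Fin n) (Fin n) R)
    (a : Fin n) (ha : a ≠ i) :
    conjT i j c B a j = B a j - c * B a i := by
  rw [conjT, Matrix.mul_transvection_apply_same i j a,
    Matrix.transvection_mul_apply_of_ne i j a j ha,
    Matrix.transvection_mul_apply_of_ne i j a i ha]
  ring

end Aux

/-- **(Tan, Lemmas 1.2 and 1.3.)** Let `R` be a commutative ring, `n ≥ 2`, and
`B = (bᵢⱼ) ∈ Mₙ(R)` with `b₁₂ = 1`. Then for any `γ₁, …, γₙ ∈ R` with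
`γ₁ + ⋯ + γₙ = Tr(B)`, the matrix `B` is `R`-similar to a matrix with diagonal
`(γ₁, …, γₙ)`. (Indices `1, 2` are `⟨0, _⟩, ⟨1, _⟩ : Fin n`.) -/
theorem prescribed_diagonal_of_offdiagonal_one
    (R : Type*) [CommRing R] (n : ℕ) (hn : 2 ≤ n) (B : Matrix (Fin n) (Fin n) R)
    (hB : B ⟨0, by omega⟩ ⟨1, by omega⟩ = 1)
    (γ : Fin n → R) (hγ : ∑ i, γ i = B.trace) :
    ∃ C : Matrix (Fin n) (Fin n) R, (∀ i, C i i = γ i) ∧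
      ∃ g : (Matrix (Fin n) (Fin n) R)ˣ,
        (g : Matrix (Fin n) (Fin n) R) * B * (↑g⁻¹ : Matrix (Fin n) (Fin n) R) = C := by
  set e0 : Fin n := ⟨0, by omega⟩ with he0
  set e1 : Fin n := ⟨1, by omega⟩ with he1
  have h01 : e0 ≠ e1 := by simp [he0, he1, Fin.ext_iff]
  -- Main induction: fix diagonal entries at positions `2 ≤ k < m`, keeping the `(e0, e1)`
  -- entry equal to `1`.
  have main : ∀ m : ℕ, m ≤ n → ∃ C, Sim B C ∧ C e0 e1 = 1 ∧
      ∀ k : Fin n, 2 ≤ (k : ℕ) → (k : ℕ) < m → C k k = γ k := by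
    intro m
    induction m with
    | zero => exact fun _ => ⟨B, Sim.refl B, hB, fun k hk hk' => by omega⟩
    | succ m ih =>
      intro hm
      obtain ⟨C, hsim, h1, hdiag⟩ := ih (by omega)
      by_cases hm2 : m < 2
      · exact ⟨C, hsim, h1, fun k hk hk' => hdiag k hk (by omega)⟩
      push_neg at hm2
      set K : Fin n := ⟨m, by omega⟩ with hK
      have hK0 : K ≠ e0 := by simp [hK, he0, Fin.ext_iff]; omega
      have hK1 : K ≠ e1 := by simp [hK, he1, Fin.ext_iff]; omega
      -- Step A: make the `(K, e1)` entry equal to 1 by conjugating with `T(K, e0, c)`.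
      set C1 := conjT K e0 (1 - C K e1) C with hC1
      have h1A : C1 e0 e1 = 1 := by
        rw [hC1, conjT_apply_of_ne_of_ne _ _ _ _ _ _ (Ne.symm hK0) (Ne.symm h01), h1]
      have hKe1 : C1 K e1 = 1 := by
        rw [hC1, conjT_apply_same_of_ne _ _ _ _ _ (Ne.symm h01), h1]
        ring
      have hdiagA : ∀ k : Fin n, 2 ≤ (k : ℕ) → (k : ℕ) < m → C1 k k = γ k := by
        intro k hk hk'
        rw [hC1, conjT_apply_of_ne_of_ne, hdiag k hk hk']
        · simp [hK, Fin.ext_iff]; omega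
        · simp [he0, Fin.ext_iff]; omega
      -- Step B: fix the `(K, K)` diagonal entry by conjugating with `T(e1, K, c)`.
      set C2 := conjT e1 K (C1 K K - γ K) C1 with hC2
      refine ⟨C2, hsim.trans ((sim_conjT _ _ hK0 _ _).trans
        (sim_conjT _ _ (Ne.symm hK1) _ _)), ?_, ?_⟩
      · rw [hC2, conjT_apply_of_ne_of_ne _ _ _ _ _ _ h01 (Ne.symm hK1), h1A]
      · intro k hk hk'
        rcases Nat.lt_or_ge (k : ℕ) m with hkm | hkm
        · rw [hC2, conjT_apply_of_ne_of_ne, hdiagA k hk hkm]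
          · simp [he1, Fin.ext_iff]; omega
          · simp [hK, Fin.ext_iff]; omega
        · have hkK : k = K := Fin.ext (show (k : ℕ) = m by omega)
          subst hkK
          rw [hC2, conjT_apply_of_ne_same _ _ _ _ _ hK1, hKe1]
          ring
  obtain ⟨C, hsim, h1, hdiag⟩ := main n le_rfl
  -- Final step: fix the `(e0, e0)` entry by conjugating with `T(e1, e0, c)`.
  set D := conjT e1 e0 (C e0 e0 - γ e0) C with hD
  have hsimD : Sim B D := hsim.trans (sim_conjT _ _ (Ne.symm h01) _ _)
  have hD0 : D e0 e0 = γ e0 := by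
    rw [hD, conjT_apply_of_ne_same _ _ _ _ _ h01, h1]
    ring
  have hDk : ∀ k : Fin n, 2 ≤ (k : ℕ) → D k k = γ k := by
    intro k hk
    rw [hD, conjT_apply_of_ne_of_ne, hdiag k hk k.isLt]
    · simp [he1, Fin.ext_iff]; omega
    · simp [he0, Fin.ext_iff]; omega
  have hne1 : ∀ k : Fin n, k ≠ e1 → D k k = γ k := by
    intro k hk
    rcases Nat.lt_or_ge (k : ℕ) 2 with h2 | h2
    · have hv : (k : ℕ) ≠ 1 := fun h => hk (Fin.ext h)
      have : k = e0 := Fin.ext (show (k : ℕ) = 0 by omega)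
      rw [this, hD0]
    · exact hDk k h2
  -- The last diagonal entry is forced by the trace condition.
  have htr : ∑ i, D i i = ∑ i, γ i := by
    rw [hγ, hsimD.trace]; rfl
  have hsum : ∑ i, (D i i - γ i) = D e1 e1 - γ e1 := by
    rw [Finset.sum_eq_single_of_mem e1 (Finset.mem_univ _)]
    intro b _ hb
    rw [hne1 b hb]; ring
  have hD1 : D e1 e1 = γ e1 := by
    have : ∑ i, (D i i - γ i) = 0 := by
      rw [Finset.sum_sub_distrib, htr, sub_self]
    rw [hsum] at this
    exact sub_eq_zero.mp this
  refine ⟨D, fun i => ?_, hsimD⟩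
  by_cases hi : i = e1
  · rw [hi, hD1]
  · exact hne1 i hi
end
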